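/- arXiv:1808.01078 — 5 statements merged into one kernel-verified Lean document; each statement's English description precedes it below -/
import Mathlib

section
/- Let P(λ) = Σ_{i=0}^d A_i λ^i be an n×n complex matrix polynomial of degree d, let ℓ ≥ 1 divide d, set k = d/ℓ, and let ε, η ≥ 0 be integers with ε+η+1 = k. Then the matrix polynomial M_{ε,η}(λ;P) satisfies the identity (Λ_η(λ^ℓ)^T ⊗ I_n) · M_{ε,η}(λ;P) · (Λ_ε(λ^ℓ) ⊗ I_n) = P(λ). In particular, the equation (Λ_η(λ^ℓ)^T ⊗ I_n) M(λ) (Λ_ε(λ^ℓ) ⊗ I_n) = P(λ) always has a solution M(λ) of degree at most ℓ. -/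
open Matrix BigOperators

noncomputable section

/-- Evaluation at `x` of the matrix polynomial with coefficients `C 0, …, C N`. -/
def mpEval {α β : Type*} (N : ℕ) (C : ℕ → Matrix α β ℂ) (x : ℂ) : Matrix α β ℂ :=
  ∑ i ∈ Finset.range (N + 1), x ^ i • C i

/-- Entrywise derivative of the matrix polynomial, evaluated at `x`. -/
def mpDer {α β : Type*} (N : ℕ) (C : ℕ → Matrix α β ℂ) (x : ℂ) : Matrix α β ℂ :=
  ∑ i ∈ Finset.range (N + 1), ((i : ℂ) * x ^ (i - 1)) • C i

/-- Spectral norm (operator 2-norm, i.e. largest singular value) of a complex matrix. -/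
def sNorm {α β : Type*} [Fintype α] [Fintype β] [DecidableEq β] (A : Matrix α β ℂ) : ℝ :=
  ‖LinearMap.toContinuousLinearMap (Matrix.toEuclideanLin A)‖

/-- Euclidean norm of a complex vector. -/
def vNorm {α : Type*} [Fintype α] (v : α → ℂ) : ℝ :=
  Real.sqrt (∑ i, ‖v i‖ ^ 2)

/-- `Λ_k(x^ℓ) ⊗ I_n`, a `(k+1)n × n` matrix whose `i`-th (0-based) `n × n` block is
`x^(ℓ(k−i)) I_n`. -/
def LamI (n k l : ℕ) (x : ℂ) : Matrix (Fin (k + 1) × Fin n) (Fin n) ℂ :=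
  Matrix.of fun p s => if p.2 = s then x ^ (l * (k - (p.1 : ℕ))) else 0

/-- `L_k(x^ℓ) ⊗ I_n`, a `kn × (k+1)n` matrix. -/
def LkI (n k l : ℕ) (x : ℂ) : Matrix (Fin k × Fin n) (Fin (k + 1) × Fin n) ℂ :=
  Matrix.of fun p q =>
    if p.2 = q.2 then
      if (q.1 : ℕ) = (p.1 : ℕ) then -1
      else if (q.1 : ℕ) = (p.1 : ℕ) + 1 then x ^ l else 0
    else 0

/-- The degree-`0` coefficient of `L_k(λ^ℓ) ⊗ I_n`. -/
def LkI0 (n k : ℕ) : Matrix (Fin k × Fin n) (Fin (k + 1) × Fin n) ℂ :=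
  Matrix.of fun p q => if p.2 = q.2 ∧ (q.1 : ℕ) = (p.1 : ℕ) then -1 else 0

/-- The degree-`ℓ` coefficient of `L_k(λ^ℓ) ⊗ I_n`. -/
def LkI1 (n k : ℕ) : Matrix (Fin k × Fin n) (Fin (k + 1) × Fin n) ℂ :=
  Matrix.of fun p q => if p.2 = q.2 ∧ (q.1 : ℕ) = (p.1 : ℕ) + 1 then 1 else 0

/-- `R_k(x^ℓ)`: `n × n` blocks `x^(ℓ(i−j)) I_n` for `j ≤ i` (0-based), `0` otherwise. -/
def Rmat (n k l : ℕ) (x : ℂ) : Matrix (Fin k × Fin n) (Fin (k + 1) × Fin n) ℂ :=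
  Matrix.of fun p q =>
    if p.2 = q.2 ∧ (q.1 : ℕ) ≤ (p.1 : ℕ) then x ^ (l * ((p.1 : ℕ) - (q.1 : ℕ))) else 0

/-- `S_k(x^ℓ)`: `n × n` blocks `x^(ℓ(k+i−j)) I_n` for `i < j` (0-based), `0` otherwise. -/
def Smat (n k l : ℕ) (x : ℂ) : Matrix (Fin k × Fin n) (Fin (k + 1) × Fin n) ℂ :=
  Matrix.of fun p q =>
    if p.2 = q.2 ∧ (p.1 : ℕ) < (q.1 : ℕ) then x ^ (l * (k + (p.1 : ℕ) - (q.1 : ℕ))) else 0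

/-- The block column `H(x; p, q, N) = [Λ_p(x^ℓ) ⊗ I_n ; R_q(x^ℓ) N(x) (Λ_p(x^ℓ) ⊗ I_n)]`. -/
def Hmat (n l p q : ℕ) (N : ℂ → Matrix (Fin (q + 1) × Fin n) (Fin (p + 1) × Fin n) ℂ)
    (x : ℂ) : Matrix ((Fin (p + 1) × Fin n) ⊕ (Fin q × Fin n)) (Fin n) ℂ :=
  Matrix.of fun r c =>
    Sum.elim (fun a => LamI n p l x a c)
      (fun a => (Rmat n q l x * (N x * LamI n p l x)) a c) r

/-- The block column `G(x; p, q, N) = [x^(qℓ)(Λ_p(x^ℓ) ⊗ I_n) ; −S_q(x^ℓ) N(x) (Λ_p(x^ℓ) ⊗ I_n)]`. -/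
def Gmat (n l p q : ℕ) (N : ℂ → Matrix (Fin (q + 1) × Fin n) (Fin (p + 1) × Fin n) ℂ)
    (x : ℂ) : Matrix ((Fin (p + 1) × Fin n) ⊕ (Fin q × Fin n)) (Fin n) ℂ :=
  Matrix.of fun r c =>
    Sum.elim (fun a => x ^ (q * l) * LamI n p l x a c)
      (fun a => (-(Smat n q l x * (N x * LamI n p l x))) a c) r

/-- Coefficients of the `(ε,n,η,n)`-block Kronecker `ℓ`-ification
`ℒ(λ) = [[M(λ), L_η(λ^ℓ)ᵀ ⊗ I_n], [L_ε(λ^ℓ) ⊗ I_n, 0]]`. -/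
def LcalCoef (n l ε η : ℕ)
    (M : ℕ → Matrix (Fin (η + 1) × Fin n) (Fin (ε + 1) × Fin n) ℂ) (i : ℕ) :
    Matrix ((Fin (η + 1) × Fin n) ⊕ (Fin ε × Fin n))
      ((Fin (ε + 1) × Fin n) ⊕ (Fin η × Fin n)) ℂ :=
  Matrix.fromBlocks (M i)
    (if i = 0 then (LkI0 n η)ᵀ else if i = l then (LkI1 n η)ᵀ else 0)
    (if i = 0 then LkI0 n ε else if i = l then LkI1 n ε else 0) 0

/-- `det P(λ)` as a scalar polynomial, where `P(λ) = Σ_{i=0}^d A_i λ^i`. -/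
def detPoly (n d : ℕ) (A : ℕ → Matrix (Fin n) (Fin n) ℂ) : Polynomial ℂ :=
  (∑ i ∈ Finset.range (d + 1), (Polynomial.X : Polynomial ℂ) ^ i • (A i).map Polynomial.C).det

/-- The horizontal concatenation `[A_0 A_1 ⋯ A_d]`. -/
def rowConcat (n d : ℕ) (A : ℕ → Matrix (Fin n) (Fin n) ℂ) :
    Matrix (Fin n) (Fin (d + 1) × Fin n) ℂ :=
  Matrix.of fun r q => A (q.1 : ℕ) r q.2

/-- Coefficientwise eigenvalue condition number of `Q(λ) = Σ_{i=0}^N C_i λ^i` at the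
eigentriple `(v, x0, u)`. -/
def coeffCond {α β : Type*} [Fintype α] [Fintype β] [DecidableEq β] (N : ℕ)
    (C : ℕ → Matrix α β ℂ) (x0 : ℂ) (u : β → ℂ) (v : α → ℂ) : ℝ :=
  (∑ i ∈ Finset.range (N + 1), ‖x0‖ ^ i * sNorm (C i)) * vNorm u * vNorm v /
    (‖x0‖ * ‖dotProduct (star v) ((mpDer N C x0).mulVec u)‖)

/-- Normwise eigenvalue condition number of `P(λ) = Σ_{i=0}^d A_i λ^i` at `(y, x0, x)`. -/
def normCond (n d : ℕ) (A : ℕ → Matrix (Fin n) (Fin n) ℂ) (x0 : ℂ)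
    (x y : Fin n → ℂ) : ℝ :=
  sNorm (rowConcat n d A) * (∑ i ∈ Finset.range (d + 1), ‖x0‖ ^ i) *
      vNorm x * vNorm y /
    (‖x0‖ * ‖dotProduct (star y) ((mpDer d A x0).mulVec x)‖)

/-- Each `n × n` block of each coefficient `M_t`, `t = 0, …, ℓ`, is `0`, `I_n`,
or one of the coefficients `A_s` of `P`.  -/
def IsCompanionM (n d l ε η : ℕ) (A : ℕ → Matrix (Fin n) (Fin n) ℂ)
    (M : ℕ → Matrix (Fin (η + 1) × Fin n) (Fin (ε + 1) × Fin n) ℂ) : Prop :=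
  ∀ t ≤ l, ∀ (i : Fin (η + 1)) (j : Fin (ε + 1)),
    (Matrix.of fun r s => M t (i, r) (j, s)) = 0 ∨
    (Matrix.of fun r s => M t (i, r) (j, s)) = (1 : Matrix (Fin n) (Fin n) ℂ) ∨
    ∃ s ≤ d, (Matrix.of fun r s' => M t (i, r) (j, s')) = A s


/-- The grade-`ℓ` matrix polynomials `B_j(λ)`: `B_1(λ) = Σ_{t=0}^ℓ A_t λ^t` and
`B_j(λ) = Σ_{t=1}^ℓ A_{ℓ(j−1)+t} λ^t` for `j ≥ 2`, evaluated at `x`. -/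
def Bval (n l : ℕ) (A : ℕ → Matrix (Fin n) (Fin n) ℂ) (j : ℕ) (x : ℂ) :
    Matrix (Fin n) (Fin n) ℂ :=
  if j = 1 then ∑ t ∈ Finset.range (l + 1), x ^ t • A t
  else ∑ t ∈ Finset.Icc 1 l, x ^ t • A (l * (j - 1) + t)

/-- The matrix polynomial `M_{ε,η}(λ; P)`, evaluated at `x`: its first block row is
`(B_k, B_{k−1}, …, B_{η+1})`, its last block column is `(B_{η+1}, B_η, …, B_1)ᵀ`,
and all other `n × n` blocks are `0`. -/
def M0val (n l ε η k : ℕ) (A : ℕ → Matrix (Fin n) (Fin n) ℂ) (x : ℂ) :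
    Matrix (Fin (η + 1) × Fin n) (Fin (ε + 1) × Fin n) ℂ :=
  Matrix.of fun pq rs =>
    (if (pq.1 : ℕ) = 0 then Bval n l A (k - (rs.1 : ℕ)) x
     else if (rs.1 : ℕ) = ε then Bval n l A (η + 1 - (pq.1 : ℕ)) x
     else 0) pq.2 rs.2

/-- `[0 ; D]`: prepend an `n × εn` zero block on top of `D`. -/
def padTop (n η ε : ℕ) (D : Matrix (Fin η × Fin n) (Fin ε × Fin n) ℂ) :
    Matrix (Fin (η + 1) × Fin n) (Fin ε × Fin n) ℂ :=
  Matrix.of fun p c =>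
    if h : (p.1 : ℕ) = 0 then 0
    else D (⟨(p.1 : ℕ) - 1, by have := p.1.isLt; omega⟩, p.2) c

/-- `[0 , D]`: prepend an `ηn × n` zero block on the left of `D`. -/
def padLeft (n η ε : ℕ) (D : Matrix (Fin η × Fin n) (Fin ε × Fin n) ℂ) :
    Matrix (Fin η × Fin n) (Fin (ε + 1) × Fin n) ℂ :=
  Matrix.of fun r q =>
    if h : (q.1 : ℕ) = 0 then 0
    else D r (⟨(q.1 : ℕ) - 1, by have := q.1.isLt; omega⟩, q.2)

/-! Sandwiching between `(Λ_η(λ^ℓ)ᵀ ⊗ I_n)` and `(Λ_ε(λ^ℓ) ⊗ I_n)` weights the block `(i, j)`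
(0-based) by `λ^(ℓ(η-i) + ℓ(ε-j))`. Every nonzero block of `M_{ε,η}(λ;P)` is some `B_m`, and it
sits where this weight is `λ^(ℓ(m-1))`, each `m = 1, …, k` occurring exactly once. Since `B_m`
collects the coefficients `A_t` with `ℓ(m-1) < t ≤ ℓm` (and also `A_0` when `m = 1`), the sum
`Σ_m λ^(ℓ(m-1)) B_m(λ)` is `P(λ)`. The coefficients of the `B_m` give a degree-`ℓ` solution. -/

open Finset

lemma sum_Icc_one_eq_sum_range {M : Type*} [AddCommMonoid M] (f : ℕ → M) (N : ℕ) :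
    ∑ t ∈ Icc 1 N, f t = ∑ t ∈ range N, f (t + 1) := by
  rw [← Finset.Ico_add_one_right_eq_Icc, sum_Ico_eq_sum_range, Nat.add_sub_cancel]
  simp only [add_comm 1]

section

variable {n : ℕ} (l : ℕ) (A : ℕ → Matrix (Fin n) (Fin n) ℂ) (x : ℂ)

lemma Bval_add_two (m : ℕ) :
    Bval n l A (m + 2) x = ∑ t ∈ range l, x ^ (t + 1) • A (l * (m + 1) + (t + 1)) := by
  rw [Bval, if_neg (by omega), sum_Icc_one_eq_sum_range]
  rfl

lemma sum_range_pow_smul_Bval (K : ℕ) :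
    ∑ m ∈ range (K + 1), x ^ (l * m) • Bval n l A (m + 1) x
      = ∑ t ∈ range (l * (K + 1) + 1), x ^ t • A t := by
  induction K with
  | zero => simp [Bval]
  | succ K ih =>
    rw [sum_range_succ, ih, Bval_add_two, Finset.smul_sum,
      show l * (K + 1 + 1) + 1 = l * (K + 1) + 1 + l by ring, sum_range_add _ (l * (K + 1) + 1) l]
    congr 1
    refine Finset.sum_congr rfl fun t _ => ?_
    rw [smul_smul, ← pow_add]
    ring_nf

end

lemma LamI_transpose_mul_mul_LamI {n : ℕ} (l ε η : ℕ) (x : ℂ)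
    (N : Matrix (Fin (η + 1) × Fin n) (Fin (ε + 1) × Fin n) ℂ) :
    (LamI n η l x)ᵀ * N * LamI n ε l x
      = ∑ i : Fin (η + 1), ∑ j : Fin (ε + 1),
          (x ^ (l * (η - i)) * x ^ (l * (ε - j))) • N.submatrix (Prod.mk i) (Prod.mk j) := by
  ext s s'
  simp only [Matrix.mul_apply, Matrix.transpose_apply, LamI, Matrix.of_apply,
    Fintype.sum_prod_type, ite_mul, mul_ite, zero_mul, mul_zero, Finset.sum_ite_eq',
    Finset.mem_univ, if_true, Finset.sum_mul, Matrix.sum_apply,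
    Matrix.smul_apply, Matrix.submatrix_apply, smul_eq_mul]
  rw [Finset.sum_comm]
  refine Finset.sum_congr rfl fun i _ => Finset.sum_congr rfl fun j _ => ?_
  ring

lemma M0val_submatrix {n : ℕ} (l ε η k : ℕ) (A : ℕ → Matrix (Fin n) (Fin n) ℂ) (x : ℂ)
    (i : Fin (η + 1)) (j : Fin (ε + 1)) :
    (M0val n l ε η k A x).submatrix (Prod.mk i) (Prod.mk j)
      = if (i : ℕ) = 0 then Bval n l A (k - j) x
        else if (j : ℕ) = ε then Bval n l A (η + 1 - i) x else 0 := by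
  ext s s'
  simp only [M0val, Matrix.submatrix_apply, Matrix.of_apply]

lemma sum_weighted_blocks_M0val {n : ℕ} (l ε η k : ℕ) (hk : ε + η + 1 = k)
    (A : ℕ → Matrix (Fin n) (Fin n) ℂ) (x : ℂ) :
    ∑ i : Fin (η + 1), ∑ j : Fin (ε + 1),
        (x ^ (l * (η - i)) * x ^ (l * (ε - j))) •
          (M0val n l ε η k A x).submatrix (Prod.mk i) (Prod.mk j)
      = ∑ m ∈ range k, x ^ (l * m) • Bval n l A (m + 1) x := by
  have first_row : ∑ j : Fin (ε + 1), (x ^ (l * η) * x ^ (l * (ε - j))) • Bval n l A (k - j) x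
      = ∑ j ∈ range (ε + 1), x ^ (l * (η + j)) • Bval n l A (η + j + 1) x := by
    rw [Fin.sum_univ_eq_sum_range (fun j => (x ^ (l * η) * x ^ (l * (ε - j))) • Bval n l A (k - j) x),
      ← sum_range_reflect]
    refine Finset.sum_congr rfl fun j hj => ?_
    have := mem_range.1 hj
    rw [← pow_add, ← mul_add]
    congr 3 <;> omega
  have last_column : ∀ i : Fin η, ∑ j : Fin (ε + 1), (x ^ (l * (η - i.succ)) * x ^ (l * (ε - j))) •
        (if (j : ℕ) = ε then Bval n l A (η + 1 - i.succ) x else 0)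
      = x ^ (l * (η - 1 - i)) • Bval n l A (η - i) x := by
    intro i
    have is_last : ∀ j : Fin (ε + 1), ((j : ℕ) = ε) = (j = Fin.last ε) := fun j => by
      simp [Fin.ext_iff]
    simp only [is_last, smul_ite, smul_zero, Finset.sum_ite_eq', Finset.mem_univ,
      if_true, Fin.val_last, Nat.sub_self, mul_zero, pow_zero, mul_one, Fin.val_succ]
    rw [show η - (i + 1) = η - 1 - i by omega, show η + 1 - (i + 1) = η - i by omega]
  have other_rows : ∑ i : Fin η, x ^ (l * (η - 1 - i)) • Bval n l A (η - i) x
      = ∑ i ∈ range η, x ^ (l * i) • Bval n l A (i + 1) x := by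
    rw [Fin.sum_univ_eq_sum_range (fun i => x ^ (l * (η - 1 - i)) • Bval n l A (η - i) x),
      ← sum_range_reflect]
    refine Finset.sum_congr rfl fun i hi => ?_
    have := mem_range.1 hi
    congr 3 <;> omega
  simp only [M0val_submatrix, Fin.sum_univ_succ (n := η), Fin.val_zero, Nat.sub_zero, if_true,
    Fin.succ_ne_zero, Fin.val_eq_zero_iff, if_false]
  rw [first_row, Finset.sum_congr rfl fun i _ => last_column i, other_rows, ← hk,
    show ε + η + 1 = η + (ε + 1) by omega, sum_range_add _ η (ε + 1), add_comm]

section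

variable {n : ℕ} (l : ℕ) (A : ℕ → Matrix (Fin n) (Fin n) ℂ)

def Bcoef (j t : ℕ) : Matrix (Fin n) (Fin n) ℂ :=
  if j = 1 then A t else if t = 0 then 0 else A (l * (j - 1) + t)

lemma mpEval_Bcoef (j : ℕ) (x : ℂ) : mpEval l (Bcoef l A j) x = Bval n l A j x := by
  unfold mpEval Bcoef Bval
  split_ifs
  · rfl
  · rw [sum_range_succ', sum_Icc_one_eq_sum_range]
    simp

def M0coef (ε η k t : ℕ) : Matrix (Fin (η + 1) × Fin n) (Fin (ε + 1) × Fin n) ℂ :=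
  Matrix.of fun pq rs =>
    (if (pq.1 : ℕ) = 0 then Bcoef l A (k - (rs.1 : ℕ)) t
     else if (rs.1 : ℕ) = ε then Bcoef l A (η + 1 - (pq.1 : ℕ)) t
     else 0) pq.2 rs.2

lemma mpEval_M0coef (ε η k : ℕ) (x : ℂ) :
    mpEval l (M0coef l A ε η k) x = M0val n l ε η k A x := by
  ext ⟨i, s⟩ ⟨j, s'⟩
  have hB (m : ℕ) := congrFun (congrFun (mpEval_Bcoef l A m x) s) s'
  simp only [mpEval, Matrix.sum_apply, Matrix.smul_apply] at hB ⊢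
  simp only [M0coef, M0val, Matrix.of_apply]
  split_ifs
  · exact hB _
  · exact hB _
  · simp

end

theorem stmt3_general (n d l k ε η : ℕ) (hd : d = l * k)
    (hk : ε + η + 1 = k)
    (A : ℕ → Matrix (Fin n) (Fin n) ℂ) :
    (∀ x : ℂ, (LamI n η l x)ᵀ * M0val n l ε η k A x * LamI n ε l x = mpEval d A x) ∧
      ∃ M : ℕ → Matrix (Fin (η + 1) × Fin n) (Fin (ε + 1) × Fin n) ℂ,
        ∀ x : ℂ, (LamI n η l x)ᵀ * mpEval l M x * LamI n ε l x = mpEval d A x := by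
  have sandwich_M0val (x : ℂ) :
      (LamI n η l x)ᵀ * M0val n l ε η k A x * LamI n ε l x = mpEval d A x := by
    obtain ⟨K, rfl⟩ : ∃ K, k = K + 1 := ⟨ε + η, hk.symm⟩
    rw [LamI_transpose_mul_mul_LamI, sum_weighted_blocks_M0val l ε η _ hk,
      sum_range_pow_smul_Bval, mpEval, hd]
  exact ⟨sandwich_M0val, M0coef l A ε η k, fun x => by rw [mpEval_M0coef, sandwich_M0val]⟩

/-- `M_{ε,η}(λ;P)` satisfies `(Λ_η(λ^ℓ)ᵀ ⊗ I_n) M_{ε,η}(λ;P) (Λ_ε(λ^ℓ) ⊗ I_n) = P(λ)`;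
in particular there is a solution `M(λ)` of degree at most `ℓ` of this equation. -/
theorem stmt3 (n d l k ε η : ℕ) (hn : 0 < n) (hl : 1 ≤ l) (hd : d = l * k)
    (hk : ε + η + 1 = k)
    (A : ℕ → Matrix (Fin n) (Fin n) ℂ) (hdeg : A d ≠ 0) :
    (∀ x : ℂ, (LamI n η l x)ᵀ * M0val n l ε η k A x * LamI n ε l x = mpEval d A x) ∧
      ∃ M : ℕ → Matrix (Fin (η + 1) × Fin n) (Fin (ε + 1) × Fin n) ℂ,
        ∀ x : ℂ, (LamI n η l x)ᵀ * mpEval l M x * LamI n ε l x = mpEval d A x :=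
  stmt3_general n d l k ε η hd hk A

end
end

section
/- Let P(λ) = Σ_{i=0}^d A_i λ^i be an n×n complex matrix polynomial of degree d, let ℓ ≥ 1 divide d, set k = d/ℓ, and let ε, η ≥ 0 be integers with ε+η+1 = k. Let M(λ) = Σ_{t=0}^ℓ M_t λ^t ∈ ℂ[λ]^{(η+1)n×(ε+1)n}, and view each coefficient M_t as an (η+1)×(ε+1) block matrix with n×n blocks [M_t]_{ij}, where 1 ≤ i ≤ η+1 and 1 ≤ j ≤ ε+1. Then M satisfies (Λ_η(λ^ℓ)^T ⊗ I_n) M(λ) (Λ_ε(λ^ℓ) ⊗ I_n) = P(λ) if and only if both of the following families of equations hold (sums over empty index sets being 0): (a) Σ_{i+j=t+2} [M_ℓ]_{ij} + Σ_{i+j=t+1} [M_0]_{ij} = A_{d−tℓ} for every t = 0, 1, …, k; and (b) Σ_{i+j=s+2} [M_{ℓ−t}]_{ij} = A_{d−sℓ−t} for every s = 0, …, k−1 and every t = 1, …, ℓ−1. -/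
open Matrix BigOperators

noncomputable section

/-!
The `(r, s)` entry of `(Λ_η(λ^ℓ)ᵀ ⊗ I_n) M(λ) (Λ_ε(λ^ℓ) ⊗ I_n)` collects the entries of the
blocks `[M_t]_{ij}` at the power `λ^(ℓ(k − 1 − (i + j)) + t)`, `0 ≤ t ≤ ℓ`. By uniqueness of
division by `ℓ`, a power `λ^(ℓq + r)` with `0 < r < ℓ` comes only from `t = r`, while
`λ^(ℓq)` comes from `t = 0` and from `t = ℓ` on two neighbouring block antidiagonals.
Comparing coefficients with those of `P` gives (b) and (a) respectively.
-/

open Finset Polynomial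

theorem Nat.mul_add_eq_mul_add_iff {l a b t r : ℕ} (ht : t < l) (hr : r < l) :
    l * a + t = l * b + r ↔ a = b ∧ t = r := by
  refine ⟨fun h => ?_, by rintro ⟨rfl, rfl⟩; rfl⟩
  have hl : 0 < l := by omega
  have hdiv := congrArg (· / l) h
  have hmod := congrArg (· % l) h
  simp only [Nat.mul_add_div hl, Nat.div_eq_of_lt ht, Nat.div_eq_of_lt hr, Nat.mul_add_mod,
    Nat.mod_eq_of_lt ht, Nat.mod_eq_of_lt hr, add_zero] at hdiv hmod
  exact ⟨hdiv, hmod⟩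

section SumIte

variable {β : Type*} [AddCommMonoid β]

theorem sum_range_ite_mul_add_eq_mul_add {l r : ℕ} (hr : r < l) (a b : ℕ) (f : ℕ → β) :
    ∑ t ∈ range l, (if l * a + t = l * b + r then f t else 0) = if a = b then f r else 0 := by
  rw [sum_eq_single_of_mem r (mem_range.2 hr)]
  · simp only [Nat.mul_add_eq_mul_add_iff hr hr, and_true]
  · intro t ht htr
    rw [if_neg fun h => htr ((Nat.mul_add_eq_mul_add_iff (mem_range.1 ht) hr).1 h).2]

theorem sum_range_succ_ite_mul_add_eq_mul {l : ℕ} (hl : 0 < l) (a b : ℕ) (f : ℕ → β) :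
    ∑ t ∈ range (l + 1), (if l * a + t = l * b then f t else 0) =
      (if a + 1 = b then f l else 0) + (if a = b then f 0 else 0) := by
  have hinit := sum_range_ite_mul_add_eq_mul_add hl a b f
  simp only [add_zero] at hinit
  have hlast : l * a + l = l * b ↔ a + 1 = b := by
    rw [← mul_add_one, Nat.mul_left_cancel_iff hl]
  rw [sum_range_succ, hinit, add_comm]
  simp only [hlast]

theorem sum_range_succ_ite_mul_add_eq_mul_add {l r : ℕ} (hr : 0 < r) (hrl : r < l) (a b : ℕ)
    (f : ℕ → β) :
    ∑ t ∈ range (l + 1), (if l * a + t = l * b + r then f t else 0) =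
      if a = b then f r else 0 := by
  have hlast : l * a + l ≠ l * b + r := by
    rw [← mul_add_one, ← add_zero (l * (a + 1)), Ne, Nat.mul_add_eq_mul_add_iff (hr.trans hrl) hrl]
    omega
  rw [sum_range_succ, sum_range_ite_mul_add_eq_mul_add hrl, if_neg hlast, add_zero]

end SumIte

theorem exists_eq_mul_sub_mul_or_eq_mul_sub_mul_sub {l k m : ℕ} (hl : 0 < l) (hm : m ≤ l * k) :
    (∃ T ≤ k, m = l * k - T * l) ∨ ∃ s < k, ∃ t, 1 ≤ t ∧ t ≤ l - 1 ∧ m = l * k - s * l - t := by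
  obtain ⟨q, r, hr, rfl⟩ : ∃ q r, r < l ∧ m = l * q + r :=
    ⟨m / l, m % l, Nat.mod_lt _ hl, (Nat.div_add_mod m l).symm⟩
  have hq : q ≤ k := Nat.le_of_mul_le_mul_left (by omega) hl
  have hlq : l * q ≤ l * k := Nat.mul_le_mul_left _ hq
  rcases Nat.eq_zero_or_pos r with rfl | hr0
  · refine .inl ⟨k - q, by omega, ?_⟩
    rw [Nat.sub_mul, mul_comm k, mul_comm q]
    omega
  · have hqk : q < k := by
      by_contra hqk
      obtain rfl : q = k := by omega
      omega
    have hlq1 : l * (q + 1) ≤ l * k := Nat.mul_le_mul_left _ hqk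
    refine .inr ⟨k - 1 - q, by omega, l - r, by omega, by omega, ?_⟩
    rw [Nat.sub_mul, Nat.sub_mul, mul_comm k, mul_comm q, one_mul]
    rw [mul_add_one] at hlq1
    omega

theorem mpEval_eq_mpEval_iff {α β : Type*} {N : ℕ} {C D : ℕ → Matrix α β ℂ} :
    (∀ x, mpEval N C x = mpEval N D x) ↔ ∀ m ≤ N, C m = D m := by
  refine ⟨fun h m hm => ?_, fun h x => sum_congr rfl fun m hm => ?_⟩
  · ext r s
    let p : ℂ[X] := ∑ i ∈ range (N + 1), monomial i (C i r s - D i r s)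
    have hp : p = 0 := Polynomial.funext fun x => by
      have := congrFun (congrFun (h x) r) s
      simp only [mpEval, Matrix.sum_apply, Matrix.smul_apply, smul_eq_mul] at this
      simp only [p, eval_finsetSum, eval_monomial, eval_zero, sum_sub_distrib, sub_mul, sub_eq_zero]
      simpa only [mul_comm] using this
    have := congrArg (coeff · m) hp
    simpa [p, finsetSum_coeff, coeff_monomial, Nat.lt_succ_iff, hm, sub_eq_zero] using this
  · rw [h m (Nat.lt_succ_iff.1 (mem_range.1 hm))]

theorem transpose_LamI_mul_mul_LamI {n l p q : ℕ}
    (B : Matrix (Fin (q + 1) × Fin n) (Fin (p + 1) × Fin n) ℂ) (x : ℂ) :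
    (LamI n q l x)ᵀ * B * LamI n p l x =
      ∑ i : Fin (q + 1), ∑ j : Fin (p + 1),
        x ^ (l * (q - i) + l * (p - j)) • Matrix.of fun r s => B (i, r) (j, s) := by
  ext r s
  simp only [Matrix.mul_apply, Matrix.transpose_apply, LamI, Matrix.of_apply,
    Fintype.sum_prod_type, ite_mul, mul_ite, zero_mul, mul_zero, sum_ite_eq', mem_univ, if_true,
    Matrix.sum_apply, Matrix.smul_apply, smul_eq_mul, sum_mul]
  rw [sum_comm]
  refine sum_congr rfl fun i _ => sum_congr rfl fun j _ => ?_
  ring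

section Sandwich

variable {n l ε η : ℕ}

def sandwichCoeff (n l ε η : ℕ) (M : ℕ → Matrix (Fin (η + 1) × Fin n) (Fin (ε + 1) × Fin n) ℂ)
    (m : ℕ) : Matrix (Fin n) (Fin n) ℂ :=
  ∑ i : Fin (η + 1), ∑ j : Fin (ε + 1), ∑ t ∈ range (l + 1),
    if l * (η - i) + l * (ε - j) + t = m then Matrix.of fun r s => M t (i, r) (j, s) else 0

theorem mul_sub_add_mul_sub {k : ℕ} (hk : ε + η + 1 = k) (i : Fin (η + 1)) (j : Fin (ε + 1)) :
    l * (η - i) + l * (ε - j) = l * (k - 1 - (i + j)) := by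
  rw [← mul_add]
  congr 1
  omega

theorem transpose_LamI_mul_mpEval_mul_LamI {k : ℕ} (hk : ε + η + 1 = k)
    (M : ℕ → Matrix (Fin (η + 1) × Fin n) (Fin (ε + 1) × Fin n) ℂ) (x : ℂ) :
    (LamI n η l x)ᵀ * mpEval l M x * LamI n ε l x = mpEval (l * k) (sandwichCoeff n l ε η M) x := by
  have hexp : ∀ (i : Fin (η + 1)) (j : Fin (ε + 1)) t, t ∈ range (l + 1) →
      l * (η - i) + l * (ε - j) + t ∈ range (l * k + 1) := by
    intro i j t ht
    rw [mem_range] at ht ⊢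
    have hij : l * (η - i + (ε - j)) ≤ l * (ε + η) := Nat.mul_le_mul_left _ (by omega)
    rw [← hk, mul_add, mul_one, ← mul_add]
    omega
  rw [transpose_LamI_mul_mul_LamI]
  calc _ = ∑ i : Fin (η + 1), ∑ j : Fin (ε + 1), ∑ t ∈ range (l + 1),
        x ^ (l * (η - i) + l * (ε - j) + t) • Matrix.of fun r s => M t (i, r) (j, s) := by
        refine sum_congr rfl fun i _ => sum_congr rfl fun j _ => ?_
        ext r s
        simp only [mpEval, Matrix.smul_apply, Matrix.of_apply, Matrix.sum_apply, smul_eq_mul,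
          mul_sum, pow_add, mul_assoc]
    _ = _ := by
        symm
        simp only [mpEval, sandwichCoeff, smul_sum, smul_ite, smul_zero]
        rw [sum_comm]
        refine sum_congr rfl fun i _ => ?_
        rw [sum_comm]
        refine sum_congr rfl fun j _ => ?_
        rw [sum_comm]
        exact sum_congr rfl fun t ht => sum_ite_eq_of_mem _ _ _ (hexp i j t ht)

theorem sandwichCoeff_mul_sub_mul {k : ℕ} (hl : 0 < l) (hk : ε + η + 1 = k)
    (M : ℕ → Matrix (Fin (η + 1) × Fin n) (Fin (ε + 1) × Fin n) ℂ) {T : ℕ} (hT : T ≤ k) :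
    sandwichCoeff n l ε η M (l * k - T * l) =
      (∑ i : Fin (η + 1), ∑ j : Fin (ε + 1),
        if (i : ℕ) + (j : ℕ) = T then Matrix.of fun r s => M l (i, r) (j, s) else 0) +
      ∑ i : Fin (η + 1), ∑ j : Fin (ε + 1),
        if (i : ℕ) + (j : ℕ) + 1 = T then Matrix.of fun r s => M 0 (i, r) (j, s) else 0 := by
  simp only [sandwichCoeff, ← sum_add_distrib]
  refine sum_congr rfl fun i _ => sum_congr rfl fun j _ => ?_
  rw [mul_sub_add_mul_sub hk i j, mul_comm T, ← Nat.mul_sub, sum_range_succ_ite_mul_add_eq_mul hl]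
  simp only [show k - 1 - (i + j) + 1 = k - T ↔ (i : ℕ) + j = T by omega,
    show k - 1 - (i + j) = k - T ↔ (i : ℕ) + j + 1 = T by omega]

theorem sandwichCoeff_mul_sub_mul_sub {k : ℕ} (hk : ε + η + 1 = k)
    (M : ℕ → Matrix (Fin (η + 1) × Fin n) (Fin (ε + 1) × Fin n) ℂ) {q t : ℕ} (hq : q < k)
    (ht : 1 ≤ t) (htl : t ≤ l - 1) :
    sandwichCoeff n l ε η M (l * k - q * l - t) =
      ∑ i : Fin (η + 1), ∑ j : Fin (ε + 1),
        if (i : ℕ) + (j : ℕ) = q then Matrix.of fun r s => M (l - t) (i, r) (j, s) else 0 := by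
  refine sum_congr rfl fun i _ => sum_congr rfl fun j _ => ?_
  have hm : l * k - q * l - t = l * (k - 1 - q) + (l - t) := by
    have : l * k - q * l = l * (k - 1 - q) + l := by
      rw [mul_comm q, ← Nat.mul_sub, ← mul_add_one]; congr 1; omega
    omega
  rw [mul_sub_add_mul_sub hk i j, hm, sum_range_succ_ite_mul_add_eq_mul_add (by omega) (by omega)]
  simp only [show k - 1 - (i + j) = k - 1 - q ↔ (i : ℕ) + j = q by omega]

end Sandwich

/-- Blocks are indexed `0`-based here, so the paper's condition `i + j = c` reads
`(i : ℕ) + (j : ℕ) + 2 = c`. -/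
theorem stmt5_general (n d l k ε η : ℕ) (hl : 1 ≤ l) (hd : d = l * k)
    (hk : ε + η + 1 = k)
    (A : ℕ → Matrix (Fin n) (Fin n) ℂ)
    (M : ℕ → Matrix (Fin (η + 1) × Fin n) (Fin (ε + 1) × Fin n) ℂ) :
    (∀ x : ℂ, (LamI n η l x)ᵀ * mpEval l M x * LamI n ε l x = mpEval d A x) ↔
      ((∀ t ≤ k,
          ((∑ i : Fin (η + 1), ∑ j : Fin (ε + 1),
                if (i : ℕ) + (j : ℕ) = t then
                  (Matrix.of fun r s => M l (i, r) (j, s)) else 0) +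
              ∑ i : Fin (η + 1), ∑ j : Fin (ε + 1),
                if (i : ℕ) + (j : ℕ) + 1 = t then
                  (Matrix.of fun r s => M 0 (i, r) (j, s)) else 0) = A (d - t * l)) ∧
        ∀ s' < k, ∀ t, 1 ≤ t → t ≤ l - 1 →
          (∑ i : Fin (η + 1), ∑ j : Fin (ε + 1),
              if (i : ℕ) + (j : ℕ) = s' then
                (Matrix.of fun r s => M (l - t) (i, r) (j, s)) else 0) =
            A (d - s' * l - t)) := by
  subst hd
  simp only [transpose_LamI_mul_mpEval_mul_LamI hk, mpEval_eq_mpEval_iff]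
  constructor
  · intro h
    refine ⟨fun T hT => ?_, fun q hq t ht htl => ?_⟩
    · rw [← sandwichCoeff_mul_sub_mul hl hk M hT, h _ (Nat.sub_le _ _)]
    · rw [← sandwichCoeff_mul_sub_mul_sub hk M hq ht htl, h _ (by omega)]
  · rintro ⟨ha, hb⟩ m hm
    obtain ⟨T, hT, rfl⟩ | ⟨q, hq, t, ht, htl, rfl⟩ :=
      exists_eq_mul_sub_mul_or_eq_mul_sub_mul_sub hl hm
    · rw [sandwichCoeff_mul_sub_mul hl hk M hT, ha T hT]
    · rw [sandwichCoeff_mul_sub_mul_sub hk M hq ht htl, hb q hq t ht htl]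

/-- Block-antidiagonal characterization of the solutions `M(λ) = Σ_{t=0}^ℓ M_t λ^t` of
`(Λ_η(λ^ℓ)ᵀ ⊗ I_n) M(λ) (Λ_ε(λ^ℓ) ⊗ I_n) = P(λ)`; blocks are indexed `0`-based here, so
the 1-based condition `i + j = c` reads `(i : ℕ) + (j : ℕ) + 2 = c`. -/
theorem stmt5 (n d l k ε η : ℕ) (hn : 0 < n) (hl : 1 ≤ l) (hd : d = l * k)
    (hk : ε + η + 1 = k)
    (A : ℕ → Matrix (Fin n) (Fin n) ℂ) (hdeg : A d ≠ 0)
    (M : ℕ → Matrix (Fin (η + 1) × Fin n) (Fin (ε + 1) × Fin n) ℂ) :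
    (∀ x : ℂ, (LamI n η l x)ᵀ * mpEval l M x * LamI n ε l x = mpEval d A x) ↔
      ((∀ t ≤ k,
          ((∑ i : Fin (η + 1), ∑ j : Fin (ε + 1),
                if (i : ℕ) + (j : ℕ) = t then
                  (Matrix.of fun r s => M l (i, r) (j, s)) else 0) +
              ∑ i : Fin (η + 1), ∑ j : Fin (ε + 1),
                if (i : ℕ) + (j : ℕ) + 1 = t then
                  (Matrix.of fun r s => M 0 (i, r) (j, s)) else 0) = A (d - t * l)) ∧
        ∀ s' < k, ∀ t, 1 ≤ t → t ≤ l - 1 →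
          (∑ i : Fin (η + 1), ∑ j : Fin (ε + 1),
              if (i : ℕ) + (j : ℕ) = s' then
                (Matrix.of fun r s => M (l - t) (i, r) (j, s)) else 0) =
            A (d - s' * l - t)) :=
  stmt5_general n d l k ε η hl hd hk A M

end
end

section
/- Let n ≥ 1, ℓ ≥ 1 and k ≥ 0 be integers and λ ∈ ℂ. If |λ| ≤ 1, then ‖Λ_k(λ^ℓ) ⊗ I_n‖₂ ≤ √(k+1), ‖R_k(λ^ℓ)‖₂ ≤ k, and ‖S_k(λ^ℓ)‖₂ ≤ k. If |λ| > 1, then |λ|^{−kℓ} ‖Λ_k(λ^ℓ) ⊗ I_n‖₂ ≤ √(k+1), |λ|^{−(k−1)ℓ} ‖R_k(λ^ℓ)‖₂ ≤ k, and |λ|^{−(k−1)ℓ} ‖S_k(λ^ℓ)‖₂ ≤ k. -/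
open Matrix BigOperators

noncomputable section

/-!
`R_k(λ^ℓ)` and `S_k(λ^ℓ)` are scalar `k × (k+1)` matrices tensored with `I_n`, and each has a zero
block column (the last, resp. the first). Their entries are powers `λ^(ℓm)` with `m ≤ k - 1`, so
they are bounded by `ρ^((k-1)ℓ)` with `ρ = max 1 |λ|`; the Schur test `‖A‖₂² ≤ ‖A‖₁ ‖A‖_∞` gives
`‖R_k‖₂, ‖S_k‖₂ ≤ k ρ^((k-1)ℓ)`. Likewise the entries of `Λ_k(λ^ℓ) ⊗ I_n` are bounded by `ρ^(kℓ)`,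
with one entry per row and `k + 1` per column, so `‖Λ_k ⊗ I_n‖₂ ≤ √(k+1) ρ^(kℓ)`.
-/

open Finset Kronecker

/-- The Schur test. -/
theorem sNorm_le_sqrt_mul_of_sum_norm_le {α β : Type*} [Fintype α] [Fintype β] [DecidableEq β]
    (A : Matrix α β ℂ) {r c : ℝ} (hr : 0 ≤ r) (hrow : ∀ i, ∑ j, ‖A i j‖ ≤ r)
    (hcol : ∀ j, ∑ i, ‖A i j‖ ≤ c) :
    sNorm A ≤ √(r * c) := by
  refine ContinuousLinearMap.opNorm_le_bound _ (Real.sqrt_nonneg _) fun v => ?_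
  rw [LinearMap.coe_toContinuousLinearMap']
  have hrow_sq : ∀ i, ‖toEuclideanLin A v i‖ ^ 2 ≤ r * ∑ j, ‖A i j‖ * ‖v j‖ ^ 2 := fun i =>
    calc ‖toEuclideanLin A v i‖ ^ 2 ≤ (∑ j, ‖A i j‖ * ‖v j‖) ^ 2 := by
          gcongr
          exact (norm_sum_le _ _).trans_eq (by simp only [norm_mul]; rfl)
      _ ≤ (∑ j, ‖A i j‖) * ∑ j, ‖A i j‖ * ‖v j‖ ^ 2 :=
          sum_sq_le_sum_mul_sum_of_sq_le_mul _ (fun _ _ => norm_nonneg _)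
            (fun _ _ => by positivity) fun _ _ => by ring_nf; rfl
      _ ≤ r * ∑ j, ‖A i j‖ * ‖v j‖ ^ 2 := by gcongr; exact hrow i
  have hsq : ‖toEuclideanLin A v‖ ^ 2 ≤ r * c * ‖v‖ ^ 2 := by
    rw [EuclideanSpace.norm_sq_eq, EuclideanSpace.norm_sq_eq]
    calc ∑ i, ‖toEuclideanLin A v i‖ ^ 2 ≤ ∑ i, r * ∑ j, ‖A i j‖ * ‖v j‖ ^ 2 :=
          sum_le_sum fun i _ => hrow_sq i
      _ = r * ∑ j, (∑ i, ‖A i j‖) * ‖v j‖ ^ 2 := by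
          rw [← mul_sum, sum_comm]
          simp_rw [sum_mul]
      _ ≤ r * ∑ j, c * ‖v j‖ ^ 2 := by gcongr with j; exact hcol j
      _ = r * c * ∑ j, ‖v j‖ ^ 2 := by rw [← mul_sum, mul_assoc]
  calc ‖toEuclideanLin A v‖ ≤ √(r * c * ‖v‖ ^ 2) := Real.le_sqrt_of_sq_le hsq
    _ = √(r * c) * ‖v‖ := by rw [Real.sqrt_mul' _ (sq_nonneg _), Real.sqrt_sq (norm_nonneg _)]

theorem sum_norm_kronecker_one_row {ι κ m : Type*} [Fintype κ] [Fintype m] [DecidableEq m]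
    (B : Matrix ι κ ℂ) (i : ι) (r : m) :
    ∑ q, ‖(B ⊗ₖ (1 : Matrix m m ℂ)) (i, r) q‖ = ∑ j, ‖B i j‖ := by
  simp [Fintype.sum_prod_type, one_apply, apply_ite]

theorem sum_norm_kronecker_one_col {ι κ m : Type*} [Fintype ι] [Fintype m] [DecidableEq m]
    (B : Matrix ι κ ℂ) (j : κ) (s : m) :
    ∑ p, ‖(B ⊗ₖ (1 : Matrix m m ℂ)) p (j, s)‖ = ∑ i, ‖B i j‖ := by
  simp [Fintype.sum_prod_type, one_apply, apply_ite]

theorem sNorm_kronecker_one_le_of_sum_norm_le {ι κ m : Type*} [Fintype ι] [Fintype κ]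
    [DecidableEq κ] [Fintype m] [DecidableEq m] (B : Matrix ι κ ℂ) {r c : ℝ} (hr : 0 ≤ r)
    (hrow : ∀ i, ∑ j, ‖B i j‖ ≤ r) (hcol : ∀ j, ∑ i, ‖B i j‖ ≤ c) :
    sNorm (B ⊗ₖ (1 : Matrix m m ℂ)) ≤ √(r * c) :=
  sNorm_le_sqrt_mul_of_sum_norm_le _ hr
    (fun ⟨i, r⟩ => (sum_norm_kronecker_one_row B i r).trans_le (hrow i))
    fun ⟨j, s⟩ => (sum_norm_kronecker_one_col B j s).trans_le (hcol j)

theorem sNorm_kronecker_one_le_of_norm_le_of_col_eq_zero {k : ℕ} {m : Type*} [Fintype m]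
    [DecidableEq m] (B : Matrix (Fin k) (Fin (k + 1)) ℂ) {t : ℝ} (ht : 0 ≤ t)
    (hB : ∀ i j, ‖B i j‖ ≤ t) (j₀ : Fin (k + 1)) (hj₀ : ∀ i, B i j₀ = 0) :
    sNorm (B ⊗ₖ (1 : Matrix m m ℂ)) ≤ k * t := by
  have hrow : ∀ i, ∑ j, ‖B i j‖ ≤ k * t := fun i =>
    calc ∑ j, ‖B i j‖ = ∑ j ∈ univ.erase j₀, ‖B i j‖ := by
          rw [sum_erase _ (by rw [hj₀, norm_zero])]
      _ ≤ (univ.erase j₀).card • t := sum_le_card_nsmul _ _ _ fun j _ => hB i j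
      _ = k * t := by simp [card_erase_of_mem]
  have hcol : ∀ j, ∑ i, ‖B i j‖ ≤ k * t := fun j =>
    (sum_le_card_nsmul _ _ _ fun i _ => hB i j).trans_eq (by simp)
  simpa [Real.sqrt_mul_self (by positivity : (0 : ℝ) ≤ k * t)] using
    sNorm_kronecker_one_le_of_sum_norm_le B (by positivity) hrow hcol

theorem pow_le_max_one_pow {a : ℝ} (ha : 0 ≤ a) {m M : ℕ} (h : m ≤ M) :
    a ^ m ≤ max 1 a ^ M :=
  (pow_le_pow_left₀ ha (le_max_right 1 a) m).trans (pow_le_pow_right₀ (le_max_left 1 a) h)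

/-- The scalar `R_k(x^ℓ)`. -/
def rBlock (k l : ℕ) (x : ℂ) : Matrix (Fin k) (Fin (k + 1)) ℂ :=
  of fun i j => if (j : ℕ) ≤ i then x ^ (l * ((i : ℕ) - j)) else 0

/-- The scalar `S_k(x^ℓ)`. -/
def sBlock (k l : ℕ) (x : ℂ) : Matrix (Fin k) (Fin (k + 1)) ℂ :=
  of fun i j => if (i : ℕ) < j then x ^ (l * (k + (i : ℕ) - j)) else 0

theorem Rmat_eq_kronecker (n k l : ℕ) (x : ℂ) :
    Rmat n k l x = rBlock k l x ⊗ₖ (1 : Matrix (Fin n) (Fin n) ℂ) := by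
  ext ⟨i, r⟩ ⟨j, s⟩
  by_cases hrs : r = s <;> simp [Rmat, rBlock, one_apply, hrs]

theorem Smat_eq_kronecker (n k l : ℕ) (x : ℂ) :
    Smat n k l x = sBlock k l x ⊗ₖ (1 : Matrix (Fin n) (Fin n) ℂ) := by
  ext ⟨i, r⟩ ⟨j, s⟩
  by_cases hrs : r = s <;> simp [Smat, sBlock, one_apply, hrs]

theorem sNorm_Rmat_le (n k l : ℕ) (x : ℂ) :
    sNorm (Rmat n k l x) ≤ max 1 ‖x‖ ^ ((k - 1) * l) * k := by
  rw [Rmat_eq_kronecker, mul_comm]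
  refine sNorm_kronecker_one_le_of_norm_le_of_col_eq_zero _ (by positivity) (fun i j => ?_)
    (Fin.last k) fun i => if_neg (by simp)
  simp only [rBlock, of_apply]
  split_ifs
  · rw [norm_pow]
    exact pow_le_max_one_pow (norm_nonneg x) <| by
      rw [mul_comm]; exact Nat.mul_le_mul_right l (by omega)
  · simp

theorem sNorm_Smat_le (n k l : ℕ) (x : ℂ) :
    sNorm (Smat n k l x) ≤ max 1 ‖x‖ ^ ((k - 1) * l) * k := by
  rw [Smat_eq_kronecker, mul_comm]
  refine sNorm_kronecker_one_le_of_norm_le_of_col_eq_zero _ (by positivity) (fun i j => ?_)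
    0 fun i => by simp [sBlock]
  simp only [sBlock, of_apply]
  split_ifs
  · rw [norm_pow]
    exact pow_le_max_one_pow (norm_nonneg x) <| by
      rw [mul_comm]; exact Nat.mul_le_mul_right l (by omega)
  · simp

theorem sNorm_LamI_le (n k l : ℕ) (x : ℂ) :
    sNorm (LamI n k l x) ≤ max 1 ‖x‖ ^ (k * l) * √(k + 1) := by
  set T := max 1 ‖x‖ ^ (k * l)
  have hT : ∀ i : Fin (k + 1), ‖x‖ ^ (l * (k - i)) ≤ T := fun i =>
    pow_le_max_one_pow (norm_nonneg x) <| by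
      rw [mul_comm]; exact Nat.mul_le_mul_right l (by omega)
  have hnorm : ∀ i r s, ‖LamI n k l x (i, r) s‖ = if r = s then ‖x‖ ^ (l * (k - i)) else 0 :=
    fun i r s => by simp only [LamI, of_apply, apply_ite norm, norm_pow, norm_zero]
  have hrow : ∀ p, ∑ s, ‖LamI n k l x p s‖ ≤ T := fun ⟨i, r⟩ => by
    simpa only [hnorm, sum_ite_eq, mem_univ, if_true] using hT i
  have hcol : ∀ s, ∑ p, ‖LamI n k l x p s‖ ≤ (k + 1) * T := fun s => by
    rw [Fintype.sum_prod_type]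
    simp only [hnorm, sum_ite_eq', mem_univ, if_true]
    exact (sum_le_card_nsmul _ _ _ fun i _ => hT i).trans_eq (by simp)
  calc sNorm (LamI n k l x) ≤ √(T * ((k + 1) * T)) :=
        sNorm_le_sqrt_mul_of_sum_norm_le _ (by positivity) hrow hcol
    _ = T * √(k + 1) := by
        rw [mul_left_comm, Real.sqrt_mul (by positivity), Real.sqrt_mul_self (by positivity),
          mul_comm]

theorem stmt6_general (n l k : ℕ) (lam : ℂ) :
    (‖lam‖ ≤ 1 →
        sNorm (LamI n k l lam) ≤ Real.sqrt ((k : ℝ) + 1) ∧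
        sNorm (Rmat n k l lam) ≤ (k : ℝ) ∧
        sNorm (Smat n k l lam) ≤ (k : ℝ)) ∧
      (1 < ‖lam‖ →
        (‖lam‖ ^ (k * l))⁻¹ * sNorm (LamI n k l lam) ≤ Real.sqrt ((k : ℝ) + 1) ∧
        (‖lam‖ ^ ((k - 1) * l))⁻¹ * sNorm (Rmat n k l lam) ≤ (k : ℝ) ∧
        (‖lam‖ ^ ((k - 1) * l))⁻¹ * sNorm (Smat n k l lam) ≤ (k : ℝ)) := by
  have hΛ := sNorm_LamI_le n k l lam
  have hR := sNorm_Rmat_le n k l lam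
  have hS := sNorm_Smat_le n k l lam
  refine ⟨fun h => ?_, fun h => ?_⟩
  · simp only [max_eq_left h, one_pow, one_mul] at hΛ hR hS
    exact ⟨hΛ, hR, hS⟩
  · have hpos : ∀ m, 0 < ‖lam‖ ^ m := fun m => pow_pos (one_pos.trans h) m
    simp only [max_eq_right h.le] at hΛ hR hS
    simp only [inv_mul_le_iff₀ (hpos _)]
    exact ⟨hΛ, hR, hS⟩

/-- Norm bounds for `Λ_k(λ^ℓ) ⊗ I_n`, `R_k(λ^ℓ)` and `S_k(λ^ℓ)`, in the two regimes
`|λ| ≤ 1` and `|λ| > 1`. -/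
theorem stmt6 (n l k : ℕ) (hn : 1 ≤ n) (hl : 1 ≤ l) (lam : ℂ) :
    (‖lam‖ ≤ 1 →
        sNorm (LamI n k l lam) ≤ Real.sqrt ((k : ℝ) + 1) ∧
        sNorm (Rmat n k l lam) ≤ (k : ℝ) ∧
        sNorm (Smat n k l lam) ≤ (k : ℝ)) ∧
      (1 < ‖lam‖ →
        (‖lam‖ ^ (k * l))⁻¹ * sNorm (LamI n k l lam) ≤ Real.sqrt ((k : ℝ) + 1) ∧
        (‖lam‖ ^ ((k - 1) * l))⁻¹ * sNorm (Rmat n k l lam) ≤ (k : ℝ) ∧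
        (‖lam‖ ^ ((k - 1) * l))⁻¹ * sNorm (Smat n k l lam) ≤ (k : ℝ)) :=
  stmt6_general n l k lam

end
end

section
/- Let P be an n×n complex matrix polynomial of degree d, let ℓ ≥ 1 divide d with k = d/ℓ, and let ℒ(λ) be an (ε,n,η,n)-block Kronecker ℓ-ification of P built from a solution M(λ) of (Λ_η(λ^ℓ)^T ⊗ I_n) M(λ) (Λ_ε(λ^ℓ) ⊗ I_n) = P(λ). Then the left-sided factorizations H(λ; η, ε, M^T)^T · ℒ(λ) = e_{ε+1}^T ⊗ P(λ) and G(λ; η, ε, M^T)^T · ℒ(λ) = e_1^T ⊗ P(λ) hold as identities of matrix polynomials, i.e., viewing each n×kn product as a row of k blocks of size n×n, in the first identity the (ε+1)-st block equals P(λ) and all others are 0, and in the second identity the first block equals P(λ) and all others are 0. Here M^T denotes the entrywise transpose of M(λ). -/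
open Matrix BigOperators

noncomputable section

/-!
Write `Λ_k`, `L_k` for `Λ_k(λ^ℓ) ⊗ I_n`, `L_k(λ^ℓ) ⊗ I_n`. For a block column
`[c Λ_η ; B Mᵀ Λ_η]` one has `[c Λ_η ; B Mᵀ Λ_η]ᵀ ℒ = [Λ_ηᵀ M (c I + Bᵀ L_ε), c (L_η Λ_η)ᵀ]`,
and `L_η Λ_η = 0`. For `H` (`c = 1`, `B = R_ε`) and `G` (`c = λ^{εℓ}`, `B = -S_ε`) the
telescoping identities `I + R_εᵀ L_ε = Λ_ε (e_{ε+1}ᵀ ⊗ I_n)` and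
`λ^{εℓ} I - S_εᵀ L_ε = Λ_ε (e_1ᵀ ⊗ I_n)`, which hold already for `n = 1` and then follow by
tensoring with `I_n`, turn the first block into `Λ_ηᵀ M Λ_ε (e_jᵀ ⊗ I_n) = e_jᵀ ⊗ P`.
-/

open scoped Kronecker

namespace KroneckerLification

section Scalar

/- Scalar versions of `Λ_k(y)`, `L_k(y)`, `R_k(y)`, `S_k(y)` with 0-based indices; the block
matrices of the statement are their Kronecker products with `I_n` at `y = λ^ℓ`. -/

variable {R : Type*} [CommRing R] (k : ℕ) (y : R)

def lamVec : Fin (k + 1) → R := fun i => y ^ (k - i)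

def lMat : Matrix (Fin k) (Fin (k + 1)) R :=
  of fun i j => if (j : ℕ) = i then -1 else if (j : ℕ) = i + 1 then y else 0

def rCoef (i j : ℕ) : R := if j ≤ i then y ^ (i - j) else 0

def sCoef (i j : ℕ) : R := if i < j then y ^ (k + i - j) else 0

def rMat : Matrix (Fin k) (Fin (k + 1)) R := of fun i j => rCoef y i j

def sMat : Matrix (Fin k) (Fin (k + 1)) R := of fun i j => sCoef k y i j

variable {k y}

lemma lMat_mulVec_apply (v : Fin (k + 1) → R) (i : Fin k) :
    (lMat k y *ᵥ v) i = -v i.castSucc + y * v i.succ := by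
  have hne : i.castSucc ≠ i.succ := (Fin.castSucc_lt_succ).ne
  simp only [mulVec, dotProduct, lMat, of_apply]
  rw [Finset.sum_eq_add (i.castSucc) (i.succ) hne]
  · simp
  · intro j _ hj
    have h1 : (j : ℕ) ≠ i := fun h => hj.1 (Fin.ext h)
    have h2 : (j : ℕ) ≠ i + 1 := fun h => hj.2 (Fin.ext h)
    simp [h1, h2]
  · simp
  · simp

lemma lMat_mulVec_lamVec : lMat k y *ᵥ lamVec k y = 0 := by
  funext i
  have hexp : k - (i.succ : ℕ) + 1 = k - (i.castSucc : ℕ) := by simp; omega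
  rw [lMat_mulVec_apply, lamVec, lamVec, ← pow_succ', hexp, neg_add_cancel, Pi.zero_apply]

lemma transpose_mul_lMat_apply (a : ℕ → ℕ → R) (p q : Fin (k + 1)) :
    ((of fun (i : Fin k) (j : Fin (k + 1)) => a i j)ᵀ * lMat k y) p q =
      (if (q : ℕ) < k then -a q p else 0) + (if 0 < (q : ℕ) then y * a (q - 1) p else 0) := by
  simp only [mul_apply, transpose_apply, lMat, of_apply]
  rw [Fin.sum_univ_eq_sum_range
    (fun i => a i p * if (q : ℕ) = i then -1 else if (q : ℕ) = i + 1 then y else 0)]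
  have hsplit : ∀ i ∈ Finset.range k,
      (a i p * if (q : ℕ) = i then -1 else if (q : ℕ) = i + 1 then y else 0) =
        (if i = q then -a q p else 0) +
          (if 0 < (q : ℕ) then (if i = q - 1 then y * a (q - 1) p else 0) else 0) := by
    intro i _
    split_ifs <;> first | omega | (subst_vars; ring)
  rw [Finset.sum_congr rfl hsplit, Finset.sum_add_distrib, Finset.sum_ite_eq', Finset.sum_ite_irrel,
    Finset.sum_ite_eq', Finset.sum_const_zero]
  simp only [Finset.mem_range]
  split_ifs <;> first | omega | rfl

lemma rCoef_zero_left (j : ℕ) : rCoef y 0 j = if j = 0 then 1 else 0 := by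
  by_cases hj : j = 0 <;> simp [rCoef, hj]

lemma mul_rCoef (i j : ℕ) :
    y * rCoef y i j = rCoef y (i + 1) j - if j = i + 1 then 1 else 0 := by
  unfold rCoef
  by_cases hji : j ≤ i
  · rw [if_pos hji, if_pos (by omega), if_neg (by omega), sub_zero, ← pow_succ']
    congr 1
    omega
  · by_cases hj : j = i + 1
    · subst hj
      simp
    · rw [if_neg hji, if_neg (by omega), if_neg hj]
      simp

lemma sCoef_zero_left (j : ℕ) : sCoef k y 0 j = if 0 < j then y ^ (k - j) else 0 := by
  simp [sCoef]

-- `hj` keeps the exponent `k + i - j` from truncating.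
lemma mul_sCoef {i j : ℕ} (hj : j ≤ k) :
    y * sCoef k y i j = sCoef k y (i + 1) j + if j = i + 1 then y ^ k else 0 := by
  unfold sCoef
  by_cases hji : j = i + 1
  · subst hji
    rw [if_pos (Nat.lt_succ_self i), if_neg (lt_irrefl _), if_pos rfl, zero_add, ← pow_succ']
    congr 1
    omega
  · rw [if_neg hji, add_zero]
    by_cases hij : i < j
    · rw [if_pos hij, if_pos (by omega), ← pow_succ']
      congr 1
      omega
    · rw [if_neg hij, if_neg (by omega), mul_zero]

lemma one_add_transpose_rMat_mul_lMat :
    1 + (rMat k y)ᵀ * lMat k y = vecMulVec (lamVec k y) (Pi.single (Fin.last k) 1) := by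
  ext p q
  rw [Matrix.add_apply, rMat, transpose_mul_lMat_apply]
  simp only [one_apply, vecMulVec_apply, lamVec, Pi.single_apply, Fin.ext_iff, Fin.val_last]
  have hp := p.is_le
  have hq := q.is_le
  rcases Nat.eq_zero_or_pos (q : ℕ) with hq0 | hq0
  · rcases Nat.eq_zero_or_pos k with hk | hk
    · simp [hk, hq0, show (p : ℕ) = 0 by omega]
    · simp [hq0, rCoef_zero_left, hk, hk.ne]
  · rw [if_pos hq0, mul_rCoef, Nat.sub_add_cancel hq0]
    rcases Nat.lt_or_ge (q : ℕ) k with hqk | hqk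
    · rw [if_pos hqk, if_neg hqk.ne]
      ring
    · have hqk : (q : ℕ) = k := by omega
      simp [hqk, rCoef, hp]

lemma pow_smul_one_sub_transpose_sMat_mul_lMat :
    y ^ k • 1 - (sMat k y)ᵀ * lMat k y = vecMulVec (lamVec k y) (Pi.single 0 1) := by
  ext p q
  rw [Matrix.sub_apply, sMat, transpose_mul_lMat_apply]
  simp only [Matrix.smul_apply, one_apply, vecMulVec_apply, lamVec, Pi.single_apply, Fin.ext_iff,
    Fin.val_zero, smul_eq_mul]
  have hp := p.is_le
  have hq := q.is_le
  rcases Nat.eq_zero_or_pos (q : ℕ) with hq0 | hq0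
  · rcases Nat.eq_zero_or_pos k with hk | hk
    · simp [hk, hq0, show (p : ℕ) = 0 by omega]
    · rw [if_pos hq0, hq0, if_pos hk, sCoef_zero_left]
      rcases Nat.eq_zero_or_pos (p : ℕ) with hp0 | hp0
      · simp [hp0]
      · simp [hp0, hp0.ne']
  · rw [if_pos hq0, mul_sCoef hp, Nat.sub_add_cancel hq0, if_neg hq0.ne']
    rcases Nat.lt_or_ge (q : ℕ) k with hqk | hqk
    · rw [if_pos hqk, mul_ite_zero, mul_one]
      ring
    · simp [show (q : ℕ) = k by omega, sCoef, hp]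

end Scalar

lemma mpEval_fromBlocks {ι₁ ι₂ κ₁ κ₂ : Type*} (x : ℂ) (N : ℕ) (A : ℕ → Matrix ι₁ κ₁ ℂ)
    (B : ℕ → Matrix ι₁ κ₂ ℂ) (C : ℕ → Matrix ι₂ κ₁ ℂ) (D : ℕ → Matrix ι₂ κ₂ ℂ) :
    mpEval N (fun i => fromBlocks (A i) (B i) (C i) (D i)) x =
      fromBlocks (mpEval N A x) (mpEval N B x) (mpEval N C x) (mpEval N D x) := by
  ext (i | i) (j | j) <;> simp [mpEval, Matrix.sum_apply]

lemma mpEval_ite_zero_ite {ι κ : Type*} (x : ℂ) {l : ℕ} (hl : 1 ≤ l) (a b : Matrix ι κ ℂ) :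
    mpEval l (fun i => if i = 0 then a else if i = l then b else 0) x = a + x ^ l • b := by
  obtain ⟨m, rfl⟩ : ∃ m, l = m + 1 := ⟨l - 1, by omega⟩
  rw [mpEval, Finset.sum_range_succ, Finset.sum_range_succ', Finset.sum_eq_zero]
  · simp
  · intro i hi
    rw [Finset.mem_range] at hi
    rw [if_neg (by omega), if_neg (by omega), smul_zero]

lemma transpose_fromRows_mul_fromBlocks {R m m' p q r : Type*} [CommRing R] [Fintype m]
    [Fintype p] [Fintype q] [DecidableEq p] (c : R) (Λ : Matrix m m' R) (N : Matrix m p R)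
    (B : Matrix q p R) (K : Matrix r m R) (L : Matrix q p R) (hK : K * Λ = 0) :
    (fromRows (c • Λ) (B * (Nᵀ * Λ)))ᵀ * fromBlocks N Kᵀ L 0 =
      fromCols (Λᵀ * N * (c • 1 + Bᵀ * L)) 0 := by
  rw [transpose_fromRows, fromCols_mul_fromBlocks, ← transpose_mul, Matrix.mul_smul, hK,
    transpose_mul, transpose_mul, transpose_transpose]
  simp only [transpose_smul, smul_mul, smul_zero, transpose_zero, Matrix.mul_zero, zero_add,
    Matrix.mul_add, Matrix.mul_smul, Matrix.mul_one, Matrix.mul_assoc]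

def unitBlockRow (n k : ℕ) (j : Fin (k + 1)) : Matrix (Fin n) (Fin (k + 1) × Fin n) ℂ :=
  of fun s q => if q.1 = j ∧ q.2 = s then 1 else 0

section Blocks

variable {n : ℕ} (k l : ℕ) (x : ℂ)

lemma LkI_eq_kronecker : LkI n k l x = lMat k (x ^ l) ⊗ₖ (1 : Matrix (Fin n) (Fin n) ℂ) := by
  ext p q
  simp only [LkI, lMat, kroneckerMap_apply, of_apply, one_apply]
  split_ifs <;> first | omega | simp_all

lemma Rmat_eq_kronecker : Rmat n k l x = rMat k (x ^ l) ⊗ₖ (1 : Matrix (Fin n) (Fin n) ℂ) := by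
  ext p q
  simp only [Rmat, rMat, rCoef, kroneckerMap_apply, of_apply, one_apply, ← pow_mul]
  split_ifs <;> simp_all

lemma Smat_eq_kronecker : Smat n k l x = sMat k (x ^ l) ⊗ₖ (1 : Matrix (Fin n) (Fin n) ℂ) := by
  ext p q
  simp only [Smat, sMat, sCoef, kroneckerMap_apply, of_apply, one_apply, ← pow_mul]
  split_ifs <;> simp_all

lemma kronecker_one_mul_LamI {α : Type*} (A : Matrix α (Fin (k + 1)) ℂ) :
    (A ⊗ₖ (1 : Matrix (Fin n) (Fin n) ℂ)) * LamI n k l x =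
      of fun p s => if p.2 = s then (A *ᵥ lamVec k (x ^ l)) p.1 else 0 := by
  ext p s
  simp [mul_apply, kroneckerMap_apply, LamI, one_apply, Fintype.sum_prod_type, mulVec, dotProduct,
    lamVec, pow_mul]

lemma LkI_mul_LamI : LkI n k l x * LamI n k l x = 0 := by
  rw [LkI_eq_kronecker, kronecker_one_mul_LamI, lMat_mulVec_lamVec]
  ext p s
  simp

lemma LamI_mul_unitBlockRow (j : Fin (k + 1)) :
    LamI n k l x * unitBlockRow n k j =
      vecMulVec (lamVec k (x ^ l)) (Pi.single j 1) ⊗ₖ (1 : Matrix (Fin n) (Fin n) ℂ) := by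
  ext p ⟨j', b⟩
  by_cases hj : j' = j <;> by_cases hb : p.2 = b <;>
    simp [mul_apply, kroneckerMap_apply, LamI, unitBlockRow, one_apply, vecMulVec_apply, lamVec,
      pow_mul, hj, hb]

lemma one_add_transpose_Rmat_mul_LkI :
    1 + (Rmat n k l x)ᵀ * LkI n k l x = LamI n k l x * unitBlockRow n k (Fin.last k) := by
  rw [Rmat_eq_kronecker, LkI_eq_kronecker, LamI_mul_unitBlockRow, ← kroneckerMap_transpose,
    transpose_one, ← mul_kronecker_mul, mul_one, ← one_add_transpose_rMat_mul_lMat, add_kronecker,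
    one_kronecker_one]

lemma pow_smul_one_sub_transpose_Smat_mul_LkI :
    x ^ (k * l) • 1 - (Smat n k l x)ᵀ * LkI n k l x = LamI n k l x * unitBlockRow n k 0 := by
  rw [sub_eq_iff_eq_add, Smat_eq_kronecker, LkI_eq_kronecker, LamI_mul_unitBlockRow,
    ← kroneckerMap_transpose, transpose_one, ← mul_kronecker_mul, mul_one, ← add_kronecker,
    ← pow_smul_one_sub_transpose_sMat_mul_lMat, sub_add_cancel, smul_kronecker, one_kronecker_one,
    mul_comm k l, pow_mul]

lemma LkI_eq_add_smul : LkI n k l x = LkI0 n k + x ^ l • LkI1 n k := by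
  ext p q
  simp only [LkI, LkI0, LkI1, of_apply, Matrix.add_apply, Matrix.smul_apply, smul_eq_mul]
  split_ifs <;> first | omega | simp_all

lemma mpEval_LcalCoef {ε η : ℕ} (hl : 1 ≤ l)
    (M : ℕ → Matrix (Fin (η + 1) × Fin n) (Fin (ε + 1) × Fin n) ℂ) :
    mpEval l (LcalCoef n l ε η M) x =
      fromBlocks (mpEval l M x) (LkI n η l x)ᵀ (LkI n ε l x) 0 := by
  unfold LcalCoef
  rw [mpEval_fromBlocks, mpEval_ite_zero_ite x hl, mpEval_ite_zero_ite x hl, LkI_eq_add_smul,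
    LkI_eq_add_smul, transpose_add, transpose_smul]
  simp [mpEval]

lemma Hmat_eq_fromRows {p q : ℕ}
    (N : ℂ → Matrix (Fin (q + 1) × Fin n) (Fin (p + 1) × Fin n) ℂ) :
    Hmat n l p q N x = fromRows (LamI n p l x) (Rmat n q l x * (N x * LamI n p l x)) := by
  ext (a | a) c <;> rfl

lemma Gmat_eq_fromRows {p q : ℕ}
    (N : ℂ → Matrix (Fin (q + 1) × Fin n) (Fin (p + 1) × Fin n) ℂ) :
    Gmat n l p q N x =
      fromRows (x ^ (q * l) • LamI n p l x) (-Smat n q l x * (N x * LamI n p l x)) := by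
  ext (a | a) c
  · rfl
  · simp [Gmat]

lemma fromCols_mul_unitBlockRow {ε η : ℕ} (P : Matrix (Fin n) (Fin n) ℂ) (j : Fin (ε + 1)) :
    fromCols (P * unitBlockRow n ε j) (0 : Matrix (Fin n) (Fin η × Fin n) ℂ) =
      of fun r c => Sum.elim (fun a => if a.1 = j then P r a.2 else 0) (fun _ => 0) c := by
  ext r (⟨i, a⟩ | a)
  · by_cases hi : i = j <;> simp [unitBlockRow, mul_apply, hi]
  · simp

lemma transpose_fromRows_mul_mpEval_LcalCoef {ε η : ℕ} (hl : 1 ≤ l)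
    (M : ℕ → Matrix (Fin (η + 1) × Fin n) (Fin (ε + 1) × Fin n) ℂ) (P : Matrix (Fin n) (Fin n) ℂ)
    (hM : (LamI n η l x)ᵀ * mpEval l M x * LamI n ε l x = P) (c : ℂ)
    (B : Matrix (Fin ε × Fin n) (Fin (ε + 1) × Fin n) ℂ) (j : Fin (ε + 1))
    (hB : c • 1 + Bᵀ * LkI n ε l x = LamI n ε l x * unitBlockRow n ε j) :
    (fromRows (c • LamI n η l x) (B * ((mpEval l M x)ᵀ * LamI n η l x)))ᵀ *
        mpEval l (LcalCoef n l ε η M) x =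
      fromCols (P * unitBlockRow n ε j) (0 : Matrix (Fin n) (Fin η × Fin n) ℂ) := by
  rw [mpEval_LcalCoef l x hl, transpose_fromRows_mul_fromBlocks _ _ _ _ _ _ (LkI_mul_LamI η l x),
    hB, ← Matrix.mul_assoc, hM]

end Blocks

end KroneckerLification

open KroneckerLification in
theorem stmt9_general (n d l ε η : ℕ) (hl : 1 ≤ l)
    (A : ℕ → Matrix (Fin n) (Fin n) ℂ)
    (M : ℕ → Matrix (Fin (η + 1) × Fin n) (Fin (ε + 1) × Fin n) ℂ)
    (hM : ∀ x : ℂ, (LamI n η l x)ᵀ * mpEval l M x * LamI n ε l x = mpEval d A x) :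
    (∀ x : ℂ,
        (Hmat n l η ε (fun y => (mpEval l M y)ᵀ) x)ᵀ *
            mpEval l (LcalCoef n l ε η M) x =
          Matrix.of fun r c =>
            Sum.elim
              (fun a : Fin (ε + 1) × Fin n =>
                if a.1 = Fin.last ε then mpEval d A x r a.2 else 0)
              (fun _ : Fin η × Fin n => (0 : ℂ)) c) ∧
      ∀ x : ℂ,
        (Gmat n l η ε (fun y => (mpEval l M y)ᵀ) x)ᵀ *
            mpEval l (LcalCoef n l ε η M) x =
          Matrix.of fun r c =>
            Sum.elim
              (fun a : Fin (ε + 1) × Fin n =>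
                if a.1 = (0 : Fin (ε + 1)) then mpEval d A x r a.2 else 0)
              (fun _ : Fin η × Fin n => (0 : ℂ)) c := by
  refine ⟨fun x => ?_, fun x => ?_⟩
  · rw [Hmat_eq_fromRows, ← fromCols_mul_unitBlockRow]
    simpa using transpose_fromRows_mul_mpEval_LcalCoef l x hl M _ (hM x) 1 _ _
      (by simpa using one_add_transpose_Rmat_mul_LkI ε l x)
  · rw [Gmat_eq_fromRows, ← fromCols_mul_unitBlockRow]
    refine transpose_fromRows_mul_mpEval_LcalCoef l x hl M _ (hM x) _ _ 0 ?_
    rw [transpose_neg, Matrix.neg_mul, ← sub_eq_add_neg]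
    exact pow_smul_one_sub_transpose_Smat_mul_LkI ε l x

/-- Left-sided factorizations `H(λ; η, ε, Mᵀ)ᵀ ℒ(λ) = e_{ε+1}ᵀ ⊗ P(λ)` and
`G(λ; η, ε, Mᵀ)ᵀ ℒ(λ) = e_1ᵀ ⊗ P(λ)`: viewing each `n × kn` product as a row of `k`
blocks of size `n × n`, in the first the `(ε+1)`-st block is `P(λ)` and all others `0`,
and in the second the first block is `P(λ)` and all others `0`. -/
theorem stmt9 (n d l ε η : ℕ) (hn : 0 < n) (hl : 1 ≤ l) (hd : d = l * (ε + η + 1))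
    (A : ℕ → Matrix (Fin n) (Fin n) ℂ) (hdeg : A d ≠ 0)
    (M : ℕ → Matrix (Fin (η + 1) × Fin n) (Fin (ε + 1) × Fin n) ℂ)
    (hM : ∀ x : ℂ, (LamI n η l x)ᵀ * mpEval l M x * LamI n ε l x = mpEval d A x) :
    (∀ x : ℂ,
        (Hmat n l η ε (fun y => (mpEval l M y)ᵀ) x)ᵀ *
            mpEval l (LcalCoef n l ε η M) x =
          Matrix.of fun r c =>
            Sum.elim
              (fun a : Fin (ε + 1) × Fin n =>
                if a.1 = Fin.last ε then mpEval d A x r a.2 else 0)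
              (fun _ : Fin η × Fin n => (0 : ℂ)) c) ∧
      ∀ x : ℂ,
        (Gmat n l η ε (fun y => (mpEval l M y)ᵀ) x)ᵀ *
            mpEval l (LcalCoef n l ε η M) x =
          Matrix.of fun r c =>
            Sum.elim
              (fun a : Fin (ε + 1) × Fin n =>
                if a.1 = (0 : Fin (ε + 1)) then mpEval d A x r a.2 else 0)
              (fun _ : Fin η × Fin n => (0 : ℂ)) c :=
  stmt9_general n d l ε η hl A M hM

end
end

section
/- Let P be a regular n×n complex matrix polynomial of degree d, let ℓ ≥ 1 divide d, and let ℒ(λ) be an (ε,n,η,n)-block Kronecker ℓ-ification of P built from a solution M(λ) of (Λ_η(λ^ℓ)^T ⊗ I_n) M(λ) (Λ_ε(λ^ℓ) ⊗ I_n) = P(λ). Let λ0 ∈ ℂ be a finite eigenvalue of P, i.e., det P(λ0) = 0. Then a nonzero vector z ∈ ℂ^{(d/ℓ)n} satisfies ℒ(λ0) z = 0 if and only if z = H(λ0; ε, η, M) x for some nonzero x ∈ ℂ^n with P(λ0) x = 0. -/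
open Matrix BigOperators

noncomputable section

/-! The square block matrix `[L_k(λ^ℓ)ᵀ ⊗ I_n, e_{k+1} ⊗ I_n]` has the left inverse
`[-R_k(λ^ℓ) ; Λ_k(λ^ℓ)ᵀ ⊗ I_n]` (four easy block identities, the main one being
`R_k L_kᵀ = -I`), hence it is also a right inverse:
`(e_{k+1} ⊗ I_n) Λ_kᵀ - L_kᵀ R_k = I`. This identity and its transpose describe the kernel of
`ℒ(λ₀) = [[M, L_ηᵀ], [L_ε, 0]]`. If `ℒ(λ₀) (z₁, z₂) = 0`, then `L_ε z₁ = 0` forces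
`z₁ = Λ_ε x` with `x` the last block of `z₁`, applying `R_η` to `M z₁ + L_ηᵀ z₂ = 0` gives
`z₂ = R_η M z₁`, and `P x = Λ_ηᵀ M z₁ = -(L_η Λ_η)ᵀ z₂ = 0`. Conversely, for `w = M Λ_ε x` the
identity gives `w + L_ηᵀ R_η w = e_{η+1} ⊗ P x = 0`. -/

lemma pow_mul_sub_eq_pow_mul_pow_mul_sub_succ {R : Type*} [Monoid R] (x : R) {k p : ℕ} (l : ℕ)
    (hp : p < k) :
    x ^ (l * (k - p)) = x ^ l * x ^ (l * (k - (p + 1))) := by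
  rw [← pow_add, show k - p = k - (p + 1) + 1 by omega, mul_add_one, add_comm]

lemma mpEval_fromBlocks {ι₁ ι₂ κ₁ κ₂ : Type*} (N : ℕ) (A : ℕ → Matrix ι₁ κ₁ ℂ)
    (B : ℕ → Matrix ι₁ κ₂ ℂ) (C : ℕ → Matrix ι₂ κ₁ ℂ) (D : ℕ → Matrix ι₂ κ₂ ℂ) (x : ℂ) :
    mpEval N (fun i => fromBlocks (A i) (B i) (C i) (D i)) x =
      fromBlocks (mpEval N A x) (mpEval N B x) (mpEval N C x) (mpEval N D x) := by
  ext (a | a) (b | b) <;> simp [mpEval, Matrix.sum_apply]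

lemma mpEval_ite_eq_add_smul {α β : Type*} {l : ℕ} (hl : l ≠ 0) (A B : Matrix α β ℂ) (x : ℂ) :
    mpEval l (fun i => if i = 0 then A else if i = l then B else 0) x = A + x ^ l • B := by
  rw [mpEval, Finset.sum_range_succ, Finset.sum_eq_single 0]
  · simp [hl]
  · intro i hi hi0
    simp [hi0, (Finset.mem_range.1 hi).ne]
  · simp [hl]

section KroneckerBlocks

variable (n k l : ℕ) (x : ℂ)

lemma LkI_mulVec_apply (w : Fin (k+1) × Fin n → ℂ) (p : Fin k) (r : Fin n) :
    (LkI n k l x *ᵥ w) (p, r) = -w (p.castSucc, r) + x ^ l * w (p.succ, r) := by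
  have hrow : ∀ q : Fin (k + 1) × Fin n, LkI n k l x (p, r) q =
      (if q = (p.castSucc, r) then -1 else 0) + (if q = (p.succ, r) then x ^ l else 0) := by
    rintro ⟨q, s⟩
    simp only [LkI, of_apply, Prod.mk.injEq, Fin.ext_iff, Fin.val_castSucc, Fin.val_succ]
    split_ifs <;> (try simp) <;> omega
  simp [mulVec, dotProduct, hrow, add_mul, Finset.sum_add_distrib, ite_mul]

lemma LkI_mul_LamI : LkI n k l x * LamI n k l x = 0 := by
  ext ⟨p, r⟩ s
  change (LkI n k l x *ᵥ fun q => LamI n k l x q s) (p, r) = 0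
  rw [LkI_mulVec_apply]
  simp only [LamI, of_apply, Fin.val_castSucc, Fin.val_succ,
    pow_mul_sub_eq_pow_mul_pow_mul_sub_succ x l p.isLt]
  split_ifs <;> ring

def lastBlockI : Matrix (Fin (k + 1) × Fin n) (Fin n) ℂ :=
  of fun p s => if p = (Fin.last k, s) then 1 else 0

lemma Rmat_mul_lastBlockI : Rmat n k l x * lastBlockI n k = 0 := by
  ext ⟨i, r⟩ s
  have hi : ¬ k ≤ (i : ℕ) := by omega
  simp [mul_apply, lastBlockI, Rmat, hi]

lemma LamI_transpose_mul_lastBlockI :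
    (LamI n k l x)ᵀ * lastBlockI n k = 1 := by
  ext r s
  simp [mul_apply, lastBlockI, LamI, one_apply, eq_comm]

lemma Rmat_mul_LkI_transpose : Rmat n k l x * (LkI n k l x)ᵀ = -1 := by
  ext ⟨i, r⟩ ⟨p, s⟩
  rw [mul_apply', dotProduct_comm]
  change (LkI n k l x *ᵥ Rmat n k l x (i, r)) (p, s) = _
  rw [LkI_mulVec_apply]
  simp only [Rmat, of_apply, Fin.val_castSucc, Fin.val_succ]
  rw [Matrix.neg_apply, one_apply]
  by_cases hrs : r = s
  · subst hrs
    rcases lt_trichotomy (p : ℕ) i with hpi | hpi | hpi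
    · have hip : i ≠ p := by omega
      simp [hpi.le, Nat.succ_le_of_lt hpi, hip, pow_mul_sub_eq_pow_mul_pow_mul_sub_succ x l hpi]
    · simp [Fin.ext hpi]
    · have hip : i ≠ p := by omega
      simp [hip, not_le.2 hpi, show ¬ (p : ℕ) + 1 ≤ i by omega]
  · simp [hrs]

lemma lastBlockI_mul_LamI_transpose_sub_LkI_transpose_mul_Rmat :
    lastBlockI n k * (LamI n k l x)ᵀ - (LkI n k l x)ᵀ * Rmat n k l x = 1 := by
  have hcard : Fintype.card (Fin (k + 1) × Fin n) = Fintype.card ((Fin k × Fin n) ⊕ Fin n) := by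
    simp [add_mul]
  have hleft : fromRows (-Rmat n k l x) (LamI n k l x)ᵀ *
      fromCols (LkI n k l x)ᵀ (lastBlockI n k) = 1 := by
    rw [fromRows_mul_fromCols, Matrix.neg_mul, Matrix.neg_mul, Rmat_mul_LkI_transpose,
      Rmat_mul_lastBlockI, LamI_transpose_mul_lastBlockI, ← transpose_mul, LkI_mul_LamI]
    simp
  have hright := (fromCols_mul_fromRows_eq_one_comm (Fintype.equivOfCardEq hcard) _ _ _ _).2 hleft
  rw [fromCols_mul_fromRows, Matrix.mul_neg] at hright
  rw [← hright]
  abel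

lemma eq_LamI_mulVec_of_LkI_mulVec_eq_zero {w : Fin (k + 1) × Fin n → ℂ}
    (hw : LkI n k l x *ᵥ w = 0) : w = LamI n k l x *ᵥ ((lastBlockI n k)ᵀ *ᵥ w) := by
  have key := congrArg transpose (lastBlockI_mul_LamI_transpose_sub_LkI_transpose_mul_Rmat n k l x)
  simp only [transpose_sub, transpose_mul, transpose_transpose, transpose_one] at key
  calc w = (LamI n k l x * (lastBlockI n k)ᵀ - (Rmat n k l x)ᵀ * LkI n k l x) *ᵥ w := by
        rw [key, one_mulVec]
    _ = _ := by rw [sub_mulVec, ← mulVec_mulVec, ← mulVec_mulVec, hw, mulVec_zero, sub_zero]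

lemma add_LkI_transpose_mulVec_Rmat_mulVec (w : Fin (k + 1) × Fin n → ℂ) :
    w + (LkI n k l x)ᵀ *ᵥ (Rmat n k l x *ᵥ w) = lastBlockI n k *ᵥ ((LamI n k l x)ᵀ *ᵥ w) := by
  have key := lastBlockI_mul_LamI_transpose_sub_LkI_transpose_mul_Rmat n k l x
  rw [sub_eq_iff_eq_add] at key
  rw [mulVec_mulVec, mulVec_mulVec, key, add_mulVec, one_mulVec]

lemma LkI_eq_LkI0_add_smul_LkI1 :
    LkI n k l x = LkI0 n k + x ^ l • LkI1 n k := by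
  ext ⟨p, r⟩ ⟨q, s⟩
  simp only [LkI, LkI0, LkI1, of_apply, Matrix.add_apply, Matrix.smul_apply, smul_eq_mul]
  split_ifs <;> simp_all

end KroneckerBlocks

lemma blockKronecker_mulVec_eq_zero_iff (n l ε η : ℕ) (x : ℂ)
    (N : Matrix (Fin (η + 1) × Fin n) (Fin (ε + 1) × Fin n) ℂ)
    (z : (Fin (ε + 1) × Fin n) ⊕ (Fin η × Fin n) → ℂ) :
    fromBlocks N (LkI n η l x)ᵀ (LkI n ε l x) 0 *ᵥ z = 0 ↔
      ∃ v : Fin n → ℂ, ((LamI n η l x)ᵀ * N * LamI n ε l x) *ᵥ v = 0 ∧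
        z = Sum.elim (LamI n ε l x *ᵥ v) (Rmat n η l x *ᵥ (N *ᵥ (LamI n ε l x *ᵥ v))) := by
  obtain ⟨z₁, z₂, rfl⟩ : ∃ z₁ z₂, z = Sum.elim z₁ z₂ := ⟨_, _, (Sum.elim_comp_inl_inr z).symm⟩
  rw [fromBlocks_mulVec, ← Sum.elim_zero_zero, Sum.elim_eq_iff]
  simp only [Sum.elim_comp_inl, Sum.elim_comp_inr, zero_mulVec, add_zero, Sum.elim_eq_iff]
  constructor
  · rintro ⟨h₁, h₂⟩
    have hz₁ := eq_LamI_mulVec_of_LkI_mulVec_eq_zero n ε l x h₂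
    have hLz₂ : (LkI n η l x)ᵀ *ᵥ z₂ = -(N *ᵥ z₁) := eq_neg_of_add_eq_zero_right h₁
    have hz₂ : z₂ = Rmat n η l x *ᵥ (N *ᵥ z₁) := by
      calc z₂ = -((Rmat n η l x * (LkI n η l x)ᵀ) *ᵥ z₂) := by
            rw [Rmat_mul_LkI_transpose, neg_mulVec, one_mulVec, neg_neg]
        _ = _ := by rw [← mulVec_mulVec, hLz₂, mulVec_neg, neg_neg]
    refine ⟨(lastBlockI n ε)ᵀ *ᵥ z₁, ?_, hz₁, by rwa [← hz₁]⟩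
    calc ((LamI n η l x)ᵀ * N * LamI n ε l x) *ᵥ ((lastBlockI n ε)ᵀ *ᵥ z₁)
        = (LamI n η l x)ᵀ *ᵥ (N *ᵥ z₁) := by rw [← mulVec_mulVec, ← mulVec_mulVec, ← hz₁]
      _ = -((LkI n η l x * LamI n η l x)ᵀ *ᵥ z₂) := by
          rw [eq_neg_of_add_eq_zero_left h₁, mulVec_neg, transpose_mul, ← mulVec_mulVec]
      _ = 0 := by rw [LkI_mul_LamI, transpose_zero, zero_mulVec, neg_zero]
  · rintro ⟨v, hv, rfl, rfl⟩
    refine ⟨?_, by rw [mulVec_mulVec, LkI_mul_LamI, zero_mulVec]⟩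
    simp only [← mulVec_mulVec] at hv
    rw [add_LkI_transpose_mulVec_Rmat_mulVec, hv, mulVec_zero]

lemma mpEval_LcalCoef (n l ε η : ℕ) (hl : l ≠ 0)
    (M : ℕ → Matrix (Fin (η + 1) × Fin n) (Fin (ε + 1) × Fin n) ℂ) (x : ℂ) :
    mpEval l (LcalCoef n l ε η M) x = fromBlocks (mpEval l M x) (LkI n η l x)ᵀ (LkI n ε l x) 0 := by
  unfold LcalCoef
  rw [mpEval_fromBlocks, mpEval_ite_eq_add_smul hl, mpEval_ite_eq_add_smul hl,
    LkI_eq_LkI0_add_smul_LkI1, LkI_eq_LkI0_add_smul_LkI1, transpose_add, transpose_smul]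
  simp [mpEval]

lemma Hmat_mulVec (n l p q : ℕ)
    (N : ℂ → Matrix (Fin (q + 1) × Fin n) (Fin (p + 1) × Fin n) ℂ) (x : ℂ) (v : Fin n → ℂ) :
    Hmat n l p q N x *ᵥ v =
      Sum.elim (LamI n p l x *ᵥ v) (Rmat n q l x *ᵥ (N x *ᵥ (LamI n p l x *ᵥ v))) := by
  ext (a | a)
  · rfl
  · simp only [Sum.elim_inr, mulVec_mulVec]
    rfl

theorem stmt10_general (n d l ε η : ℕ) (hl : 1 ≤ l)
    (A : ℕ → Matrix (Fin n) (Fin n) ℂ)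
    (M : ℕ → Matrix (Fin (η + 1) × Fin n) (Fin (ε + 1) × Fin n) ℂ)
    (hM : ∀ x : ℂ, (LamI n η l x)ᵀ * mpEval l M x * LamI n ε l x = mpEval d A x)
    (lam0 : ℂ)
    (z : ((Fin (ε + 1) × Fin n) ⊕ (Fin η × Fin n)) → ℂ) (hz : z ≠ 0) :
    (mpEval l (LcalCoef n l ε η M) lam0).mulVec z = 0 ↔
      ∃ x : Fin n → ℂ, x ≠ 0 ∧ (mpEval d A lam0).mulVec x = 0 ∧
        z = (Hmat n l ε η (mpEval l M) lam0).mulVec x := by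
  rw [mpEval_LcalCoef n l ε η (Nat.one_le_iff_ne_zero.1 hl), blockKronecker_mulVec_eq_zero_iff,
    ← hM lam0]
  simp only [Hmat_mulVec]
  constructor
  · rintro ⟨x, hPx, rfl⟩
    exact ⟨x, fun hx => hz (by simp [hx]), hPx, rfl⟩
  · rintro ⟨x, -, hPx, rfl⟩
    exact ⟨x, hPx, rfl⟩

/-- Right eigenvector formula (via `H`): for a finite eigenvalue `lam0` of the regular
polynomial `P`, a nonzero `z` satisfies `ℒ(lam0) z = 0` iff `z = H(lam0; ε, η, M) x` for
some nonzero `x` with `P(lam0) x = 0`. -/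
theorem stmt10 (n d l ε η : ℕ) (hn : 0 < n) (hl : 1 ≤ l) (hd : d = l * (ε + η + 1))
    (A : ℕ → Matrix (Fin n) (Fin n) ℂ) (hdeg : A d ≠ 0)
    (hreg : detPoly n d A ≠ 0)
    (M : ℕ → Matrix (Fin (η + 1) × Fin n) (Fin (ε + 1) × Fin n) ℂ)
    (hM : ∀ x : ℂ, (LamI n η l x)ᵀ * mpEval l M x * LamI n ε l x = mpEval d A x)
    (lam0 : ℂ) (heig : (mpEval d A lam0).det = 0)
    (z : ((Fin (ε + 1) × Fin n) ⊕ (Fin η × Fin n)) → ℂ) (hz : z ≠ 0) :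
    (mpEval l (LcalCoef n l ε η M) lam0).mulVec z = 0 ↔
      ∃ x : Fin n → ℂ, x ≠ 0 ∧ (mpEval d A lam0).mulVec x = 0 ∧
        z = (Hmat n l ε η (mpEval l M) lam0).mulVec x :=
  stmt10_general n d l ε η hl A M hM lam0 z hz
end
end
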